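/- Lemma 2: Consider a single-state discrete memoryless MAC P_{Y|W,X1,X2} with state pmf P_W, and suppose that the channel from Transmitter 1 (uninformed) to an informed receiver has zero capacity: for every x2 ∈ 𝒳2 and every pmf Q on 𝒳1, the mutual information I(X1; Y,W) computed under the joint distribution Q(x1)·P_W(w)·P_{Y|W,X1,X2}(y|w,x1,x2) equals zero. Then for every tuple (U,V,V1,V2,X1,X2,W,Y) of finitely supported random variables whose joint pmf factors as P_U(u)·P_{X1|U}(x1|u)·P_{X2|U}(x2|u)·P_W(w)·P_{V|W}(v|w)·P_{V1|W,X1}(v1|w,x1)·P_{V2|W,X2}(v2|w,x2)·P_{Y|W,X1,X2}(y|w,x1,x2), and every choice of nonnegative reals R0, R0⁽¹⁾, R0⁽²⁾, R1, R2 satisfying R1+R0⁽¹⁾ ≤ I(X1;Y,V1,V2,V|X2,U), R0+R1+R2+R0⁽¹⁾+R0⁽²⁾ ≤ I(X1,X2;Y,V1,V2,V), R0⁽¹⁾ ≥ I(X1,W;V1|V,V2,Y), and R0⁽¹⁾+R0⁽²⁾+R0 ≥ I(X1,X2,W;V1,V2,V|Y), one must have R1 = 0 and R2 ≤ I(X2;Y).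 -/

import Mathlib

attribute [local instance] Classical.propDecidable

/-- The distribution (pmf) of a random variable `X` on the finite sample space `Ω`
equipped with the pmf `p`. -/
noncomputable def distOf {Ω α : Type*} [Fintype Ω] (p : Ω → ℝ) (X : Ω → α) (a : α) : ℝ :=
  ∑ ω, if X ω = a then p ω else 0

/-- `p` is a probability mass function. -/
def IsPMF {Ω : Type*} [Fintype Ω] (p : Ω → ℝ) : Prop :=
  (∀ ω, 0 ≤ p ω) ∧ ∑ ω, p ω = 1

/-- Shannon entropy (in bits) of the random variable `X`. -/
noncomputable def ent {Ω α : Type*} [Fintype Ω] [Fintype α] (p : Ω → ℝ) (X : Ω → α) : ℝ :=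
  ∑ a : α, -(distOf p X a * Real.logb 2 (distOf p X a))

/-- Conditional entropy `H(X|Y)` in bits. -/
noncomputable def condEnt {Ω α β : Type*} [Fintype Ω] [Fintype α] [Fintype β]
    (p : Ω → ℝ) (X : Ω → α) (Y : Ω → β) : ℝ :=
  ent p (fun ω => (X ω, Y ω)) - ent p Y

/-- Mutual information `I(X;Y)` in bits. -/
noncomputable def mi {Ω α β : Type*} [Fintype Ω] [Fintype α] [Fintype β]
    (p : Ω → ℝ) (X : Ω → α) (Y : Ω → β) : ℝ :=
  ent p X + ent p Y - ent p (fun ω => (X ω, Y ω))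

/-- Conditional mutual information `I(X;Y|Z)` in bits. -/
noncomputable def cmi {Ω α β γ : Type*} [Fintype Ω] [Fintype α] [Fintype β] [Fintype γ]
    (p : Ω → ℝ) (X : Ω → α) (Y : Ω → β) (Z : Ω → γ) : ℝ :=
  ent p (fun ω => (X ω, Z ω)) + ent p (fun ω => (Y ω, Z ω))
    - ent p (fun ω => (X ω, Y ω, Z ω)) - ent p Z

/-!
Zero capacity from `X1` to a receiver that sees `(Y, W)`, tested with an input of full support,
forces `P(y | w, x1, x2)` not to depend on `x1` wherever `P(w) > 0`. The joint law then factors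
as `P(u, x1, x2) · P(w, v, v2, y | x2) · P(v1 | w, x1)`, which yields the conditional
independences `X1 ⊥ (W, V, V2, Y) | (X2, U)`, `V1 ⊥ (X2, U) | (X1, W, V, V2, Y)` and
`X1 ⊥ Y | X2`. By the chain rule and nonnegativity of conditional mutual information, the first
two give `I(X1; Y, V1, V2, V | X2, U) ≤ I(X1, W; V1 | V, V2, Y) ≤ R0⁽¹⁾`, hence `R1 = 0`; the
third gives `I(X1, X2; Y) = I(X2; Y)`, and the sum-rate bound combined with the last constraint
leaves `R2 ≤ I(X2; Y)`.
-/

open Finset Real InformationTheory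

section Law

variable {Ω α β : Type*} [Fintype Ω] (p : Ω → ℝ)

lemma distOf_nonneg (hp0 : ∀ ω, 0 ≤ p ω) (X : Ω → α) (a : α) : 0 ≤ distOf p X a :=
  sum_nonneg fun ω _ => by split_ifs <;> simp [hp0 ω]

lemma distOf_congr {X : Ω → α} {Y : Ω → β} {a : α} {b : β} (h : ∀ ω, X ω = a ↔ Y ω = b) :
    distOf p X a = distOf p Y b := by
  simp only [distOf, h]

lemma distOf_le_distOf (hp0 : ∀ ω, 0 ≤ p ω) {X : Ω → α} {Y : Ω → β} {a : α} {b : β}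
    (h : ∀ ω, X ω = a → Y ω = b) : distOf p X a ≤ distOf p Y b :=
  sum_le_sum fun ω _ => by
    by_cases hX : X ω = a
    · simp [hX, h ω hX]
    · simp only [hX, if_false]; split_ifs <;> simp [hp0 ω]

lemma distOf_id (ω₀ : Ω) : distOf p (fun ω => ω) ω₀ = p ω₀ := by
  simp [distOf]

lemma sum_mul_comp [Fintype α] (X : Ω → α) (F : α → ℝ) :
    ∑ ω, p ω * F (X ω) = ∑ a, distOf p X a * F a := by
  simp only [distOf, sum_mul, ite_mul, zero_mul]
  rw [sum_comm]
  simp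

lemma sum_distOf [Fintype α] (X : Ω → α) : ∑ a, distOf p X a = ∑ ω, p ω := by
  simpa using (sum_mul_comp p X fun _ => 1).symm

lemma sum_distOf_prodMk_right [Fintype β] (A : Ω → α) (B : Ω → β) (a : α) :
    ∑ b, distOf p (fun ω => (A ω, B ω)) (a, b) = distOf p A a := by
  simp only [distOf, Prod.mk.injEq]
  rw [sum_comm]
  refine sum_congr rfl fun ω _ => ?_
  by_cases h : A ω = a <;> simp [h]

lemma sum_distOf_prodMk_left [Fintype α] (A : Ω → α) (B : Ω → β) (b : β) :
    ∑ a, distOf p (fun ω => (A ω, B ω)) (a, b) = distOf p B b := by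
  rw [← sum_distOf_prodMk_right p B A b]
  exact sum_congr rfl fun a _ => distOf_congr p fun ω => by simp [and_comm]

end Law

section Entropy

variable {Ω α β γ δ α' β' γ' : Type*} [Fintype Ω] [Fintype α] [Fintype β] [Fintype γ]
  [Fintype δ] [Fintype α'] [Fintype β'] [Fintype γ'] (p : Ω → ℝ)

lemma ent_eq_neg_sum_of_comp {T : Type*} [Fintype T] (X : Ω → α) (Z : Ω → T) (f : T → α)
    (hX : ∀ ω, X ω = f (Z ω)) :
    ent p X = -∑ t, distOf p Z t * logb 2 (distOf p X (f t)) := by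
  rw [← sum_mul_comp p Z fun t => logb 2 (distOf p X (f t))]
  simp only [← hX]
  rw [sum_mul_comp p X fun a => logb 2 (distOf p X a), ent, sum_neg_distrib]

lemma ent_congr {X : Ω → α} {Y : Ω → β} (h : ∀ ω ω', X ω = X ω' ↔ Y ω = Y ω') :
    ent p X = ent p Y := by
  rw [ent_eq_neg_sum_of_comp p X (fun ω => ω) X fun _ => rfl,
    ent_eq_neg_sum_of_comp p Y (fun ω => ω) Y fun _ => rfl]
  simp only [distOf_id]
  congr 1
  exact sum_congr rfl fun ω _ => by rw [distOf_congr p fun ω' => h ω' ω]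

lemma cmi_congr {A : Ω → α} {B : Ω → β} {C : Ω → γ} {A' : Ω → α'} {B' : Ω → β'}
    {C' : Ω → γ'} (hA : ∀ ω ω', A ω = A ω' ↔ A' ω = A' ω')
    (hB : ∀ ω ω', B ω = B ω' ↔ B' ω = B' ω') (hC : ∀ ω ω', C ω = C ω' ↔ C' ω = C' ω') :
    cmi p A B C = cmi p A' B' C' := by
  have hAC : ent p (fun ω => (A ω, C ω)) = ent p (fun ω => (A' ω, C' ω)) :=
    ent_congr p fun ω ω' => by simp only [Prod.mk.injEq, hA ω ω', hC ω ω']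
  have hBC : ent p (fun ω => (B ω, C ω)) = ent p (fun ω => (B' ω, C' ω)) :=
    ent_congr p fun ω ω' => by simp only [Prod.mk.injEq, hB ω ω', hC ω ω']
  have hABC : ent p (fun ω => (A ω, B ω, C ω)) = ent p (fun ω => (A' ω, B' ω, C' ω)) :=
    ent_congr p fun ω ω' => by simp only [Prod.mk.injEq, hA ω ω', hB ω ω', hC ω ω']
  unfold cmi
  rw [hAC, hBC, hABC, ent_congr p hC]

lemma cmi_comm (A : Ω → α) (B : Ω → β) (C : Ω → γ) : cmi p A B C = cmi p B A C := by
  have : ent p (fun ω => (A ω, B ω, C ω)) = ent p (fun ω => (B ω, A ω, C ω)) :=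
    ent_congr p fun ω ω' => by simp only [Prod.mk.injEq]; tauto
  unfold cmi
  linarith

lemma cmi_prod_right (A : Ω → α) (B : Ω → β) (D : Ω → δ) (C : Ω → γ) :
    cmi p A (fun ω => (B ω, D ω)) C
      = cmi p A B C + cmi p A D (fun ω => (B ω, C ω)) := by
  have h₁ : ent p (fun ω => ((B ω, D ω), C ω)) = ent p (fun ω => (D ω, B ω, C ω)) :=
    ent_congr p fun ω ω' => by simp only [Prod.mk.injEq]; tauto
  have h₂ : ent p (fun ω => (A ω, (B ω, D ω), C ω)) = ent p (fun ω => (A ω, D ω, B ω, C ω)) :=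
    ent_congr p fun ω ω' => by simp only [Prod.mk.injEq]; tauto
  unfold cmi
  linarith

lemma mi_prod_right (A : Ω → α) (B : Ω → β) (D : Ω → δ) :
    mi p A (fun ω => (B ω, D ω)) = mi p A B + cmi p A D B := by
  have h₁ : ent p (fun ω => (B ω, D ω)) = ent p (fun ω => (D ω, B ω)) :=
    ent_congr p fun ω ω' => by simp only [Prod.mk.injEq]; tauto
  have h₂ : ent p (fun ω => (A ω, B ω, D ω)) = ent p (fun ω => (A ω, D ω, B ω)) :=
    ent_congr p fun ω ω' => by simp only [Prod.mk.injEq]; tauto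
  unfold mi cmi
  linarith

lemma mi_prod_left (A : Ω → α) (B : Ω → β) (C : Ω → γ) :
    mi p (fun ω => (A ω, B ω)) C = mi p B C + cmi p A C B := by
  have h₁ : ent p (fun ω => (B ω, C ω)) = ent p (fun ω => (C ω, B ω)) :=
    ent_congr p fun ω ω' => by simp only [Prod.mk.injEq]; tauto
  have h₂ : ent p (fun ω => ((A ω, B ω), C ω)) = ent p (fun ω => (A ω, C ω, B ω)) :=
    ent_congr p fun ω ω' => by simp only [Prod.mk.injEq]; tauto
  unfold mi cmi
  linarith

lemma mi_eq_cmi_const (hp1 : ∑ ω, p ω = 1) (A : Ω → α) (B : Ω → β) :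
    mi p A B = cmi p A B fun _ => () := by
  have h₀ : ent p (fun _ => ()) = 0 := by
    simp [ent, distOf, hp1]
  have hA : ent p (fun ω => (A ω, ())) = ent p A := ent_congr p fun ω ω' => by simp
  have hB : ent p (fun ω => (B ω, ())) = ent p B := ent_congr p fun ω ω' => by simp
  have hAB : ent p (fun ω => (A ω, B ω, ())) = ent p (fun ω => (A ω, B ω)) :=
    ent_congr p fun ω ω' => by simp
  unfold mi cmi
  linarith

end Entropy

lemma mul_log_div_eq_mul_klFun {x y : ℝ} (hxy : y = 0 → x = 0) :
    x * log (x / y) = y * klFun (x / y) + (x - y) := by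
  rcases eq_or_ne y 0 with rfl | hy
  · simp [hxy rfl]
  · rw [klFun_apply]
    field_simp
    ring

lemma sum_mul_log_div_eq_sum_mul_klFun {ι : Type*} [Fintype ι] {x y : ι → ℝ}
    (hxy : ∀ i, y i = 0 → x i = 0) (hsum : ∑ i, x i = ∑ i, y i) :
    ∑ i, x i * log (x i / y i) = ∑ i, y i * klFun (x i / y i) := by
  rw [sum_congr rfl fun i _ => mul_log_div_eq_mul_klFun (hxy i), sum_add_distrib,
    sum_sub_distrib, hsum, sub_self, add_zero]

section CondMutualInfo

variable {Ω α β γ : Type*} [Fintype Ω] (p : Ω → ℝ) (A : Ω → α) (B : Ω → β) (C : Ω → γ)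

/-- The law `P(a|c) P(b|c) P(c)` that `(A, B, C)` would have if `A` and `B` were
conditionally independent given `C` (where `P(c) = 0`, the junk value `0` is the right one). -/
noncomputable def condIndepLaw (t : α × β × γ) : ℝ :=
  distOf p (fun ω => (A ω, C ω)) (t.1, t.2.2) * distOf p (fun ω => (B ω, C ω)) (t.2.1, t.2.2)
    / distOf p C t.2.2

lemma condIndepLaw_nonneg (hp0 : ∀ ω, 0 ≤ p ω) (t : α × β × γ) :
    0 ≤ condIndepLaw p A B C t :=
  div_nonneg (mul_nonneg (distOf_nonneg p hp0 _ _) (distOf_nonneg p hp0 _ _))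
    (distOf_nonneg p hp0 _ _)

lemma distOf_eq_zero_of_condIndepLaw_eq_zero (hp0 : ∀ ω, 0 ≤ p ω) {t : α × β × γ}
    (h : condIndepLaw p A B C t = 0) : distOf p (fun ω => (A ω, B ω, C ω)) t = 0 := by
  obtain ⟨a, b, c⟩ := t
  refine le_antisymm ?_ (distOf_nonneg p hp0 _ _)
  simp only [condIndepLaw, div_eq_zero_iff, mul_eq_zero] at h
  rcases h with (h | h) | h <;> rw [← h] <;> exact distOf_le_distOf p hp0 fun ω hω => by simp_all

variable [Fintype α] [Fintype β] [Fintype γ]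

lemma sum_condIndepLaw : ∑ t, condIndepLaw p A B C t = ∑ ω, p ω := by
  have hA : ∀ c, ∑ a, distOf p (fun ω => (A ω, C ω)) (a, c) = distOf p C c :=
    sum_distOf_prodMk_left p A C
  have hB : ∀ c, ∑ b, distOf p (fun ω => (B ω, C ω)) (b, c) = distOf p C c :=
    sum_distOf_prodMk_left p B C
  calc ∑ t, condIndepLaw p A B C t
      = ∑ c, (∑ a, distOf p (fun ω => (A ω, C ω)) (a, c))
          * (∑ b, distOf p (fun ω => (B ω, C ω)) (b, c)) / distOf p C c := by
        simp only [condIndepLaw, Fintype.sum_prod_type, sum_mul_sum, sum_div]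
        exact (sum_congr rfl fun _ _ => sum_comm).trans sum_comm
    _ = ∑ ω, p ω := by simp only [hA, hB, mul_self_div_self, sum_distOf]

lemma cmi_mul_log_two (hp0 : ∀ ω, 0 ≤ p ω) :
    cmi p A B C * log 2 = ∑ t, distOf p (fun ω => (A ω, B ω, C ω)) t
      * log (distOf p (fun ω => (A ω, B ω, C ω)) t / condIndepLaw p A B C t) := by
  set T := fun ω => (A ω, B ω, C ω)
  have eAC := ent_eq_neg_sum_of_comp p (fun ω => (A ω, C ω)) T (fun t => (t.1, t.2.2))
    fun _ => rfl
  have eBC := ent_eq_neg_sum_of_comp p (fun ω => (B ω, C ω)) T (fun t => (t.2.1, t.2.2))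
    fun _ => rfl
  have eC := ent_eq_neg_sum_of_comp p C T (fun t => t.2.2) fun _ => rfl
  have eT := ent_eq_neg_sum_of_comp p T T id fun _ => rfl
  unfold cmi
  rw [eAC, eBC, eC, eT]
  simp only [← sum_neg_distrib, ← sum_add_distrib, ← sum_sub_distrib, sum_mul]
  refine sum_congr rfl fun t _ => ?_
  obtain ⟨a, b, c⟩ := t
  rcases (distOf_nonneg p hp0 T (a, b, c)).eq_or_lt with h | h
  · simp [← h]
  have hAC : 0 < distOf p (fun ω => (A ω, C ω)) (a, c) :=
    h.trans_le (distOf_le_distOf p hp0 fun ω hω => by simp_all [T])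
  have hBC : 0 < distOf p (fun ω => (B ω, C ω)) (b, c) :=
    h.trans_le (distOf_le_distOf p hp0 fun ω hω => by simp_all [T])
  have hC : 0 < distOf p C c := h.trans_le (distOf_le_distOf p hp0 fun ω hω => by simp_all [T])
  simp only [condIndepLaw, id, logb]
  rw [log_div h.ne' (by positivity), log_div (by positivity) hC.ne', log_mul hAC.ne' hBC.ne']
  field_simp
  ring

lemma cmi_mul_log_two_eq_sum_klFun (hp0 : ∀ ω, 0 ≤ p ω) :
    cmi p A B C * log 2 = ∑ t, condIndepLaw p A B C t
      * klFun (distOf p (fun ω => (A ω, B ω, C ω)) t / condIndepLaw p A B C t) := by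
  rw [cmi_mul_log_two p A B C hp0]
  exact sum_mul_log_div_eq_sum_mul_klFun
    (fun _ => distOf_eq_zero_of_condIndepLaw_eq_zero p A B C hp0)
    (by rw [sum_distOf, sum_condIndepLaw])

lemma cmi_nonneg (hp0 : ∀ ω, 0 ≤ p ω) : 0 ≤ cmi p A B C := by
  have hlog : 0 < log 2 := log_pos one_lt_two
  refine nonneg_of_mul_nonneg_left ?_ hlog
  rw [cmi_mul_log_two_eq_sum_klFun p A B C hp0]
  exact sum_nonneg fun t _ => mul_nonneg (condIndepLaw_nonneg p A B C hp0 t)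
    (klFun_nonneg (div_nonneg (distOf_nonneg p hp0 _ _) (condIndepLaw_nonneg p A B C hp0 t)))

lemma cmi_eq_zero_iff (hp0 : ∀ ω, 0 ≤ p ω) :
    cmi p A B C = 0 ↔ ∀ t, distOf p (fun ω => (A ω, B ω, C ω)) t = condIndepLaw p A B C t := by
  have hlog : log 2 ≠ 0 := (log_pos one_lt_two).ne'
  rw [← mul_eq_zero_iff_right hlog, cmi_mul_log_two_eq_sum_klFun p A B C hp0,
    sum_eq_zero_iff_of_nonneg fun t _ => mul_nonneg (condIndepLaw_nonneg p A B C hp0 t)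
      (klFun_nonneg (div_nonneg (distOf_nonneg p hp0 _ _) (condIndepLaw_nonneg p A B C hp0 t)))]
  refine forall_congr' fun t => ?_
  simp only [mem_univ, true_implies, mul_eq_zero]
  constructor
  · rintro (h | h)
    · rw [h, distOf_eq_zero_of_condIndepLaw_eq_zero p A B C hp0 h]
    · rw [klFun_eq_zero_iff (div_nonneg (distOf_nonneg p hp0 _ _)
        (condIndepLaw_nonneg p A B C hp0 t))] at h
      exact (div_eq_one_iff_eq (by rintro h₀; simp [h₀] at h)).mp h
  · intro h
    rw [h]
    rcases eq_or_ne (condIndepLaw p A B C t) 0 with h₀ | h₀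
    · exact .inl h₀
    · exact .inr (by rw [div_self h₀, klFun_one])

lemma cmi_eq_zero_of_factor (hp0 : ∀ ω, 0 ≤ p ω) (f : α → γ → ℝ) (g : β → γ → ℝ)
    (h : ∀ a b c, distOf p (fun ω => (A ω, B ω, C ω)) (a, b, c) = f a c * g b c) :
    cmi p A B C = 0 := by
  have hAC : ∀ a c, distOf p (fun ω => (A ω, C ω)) (a, c) = f a c * ∑ b, g b c := by
    intro a c
    rw [← sum_distOf_prodMk_right p (fun ω => (A ω, C ω)) B, mul_sum]
    refine sum_congr rfl fun b _ => ?_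
    rw [← h]
    exact distOf_congr p fun ω => by simp only [Prod.mk.injEq]; tauto
  have hBC : ∀ b c, distOf p (fun ω => (B ω, C ω)) (b, c) = (∑ a, f a c) * g b c := by
    intro b c
    rw [← sum_distOf_prodMk_left p A (fun ω => (B ω, C ω)), sum_mul]
    exact sum_congr rfl fun a _ => h a b c
  have hC : ∀ c, distOf p C c = (∑ a, f a c) * ∑ b, g b c := by
    intro c
    rw [← sum_distOf_prodMk_left p A C, sum_mul]
    exact sum_congr rfl fun a _ => hAC a c
  rw [cmi_eq_zero_iff p A B C hp0]
  rintro ⟨a, b, c⟩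
  rcases eq_or_ne (distOf p C c) 0 with h₀ | h₀
  · simp only [condIndepLaw, h₀, div_zero]
    exact le_antisymm (h₀ ▸ distOf_le_distOf p hp0 fun ω hω => by simp_all)
      (distOf_nonneg p hp0 _ _)
  · rw [hC] at h₀
    rw [condIndepLaw, hAC, hBC, hC, h, eq_div_iff h₀]
    ring

lemma distOf_prodMk_eq_mul_of_mi_eq_zero (hp : IsPMF p) (h : mi p A B = 0) (a : α) (b : β) :
    distOf p (fun ω => (A ω, B ω)) (a, b) = distOf p A a * distOf p B b := by
  rw [mi_eq_cmi_const p hp.2, cmi_eq_zero_iff p A B _ hp.1] at h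
  have hunit : distOf p (fun _ => ()) () = 1 := by simp [distOf, hp.2]
  have := h (a, b, ())
  simp only [condIndepLaw, hunit, div_one] at this
  rw [distOf_congr p (Y := fun ω => (A ω, B ω, ())) (b := (a, b, ())) fun ω => by simp, this,
    distOf_congr p (X := fun ω => (A ω, ())) (Y := A) (b := a) fun ω => by simp,
    distOf_congr p (X := fun ω => (B ω, ())) (Y := B) (b := b) fun ω => by simp]

lemma cmi_le_cmi_prod_right (hp0 : ∀ ω, 0 ≤ p ω) {δ : Type*} [Fintype δ] (D : Ω → δ) :
    cmi p A D (fun ω => (B ω, C ω)) ≤ cmi p A (fun ω => (B ω, D ω)) C := by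
  rw [cmi_prod_right]
  linarith [cmi_nonneg p A B C hp0]

lemma cmi_le_cmi_of_determines_right (hp0 : ∀ ω, 0 ≤ p ω) {β' : Type*} [Fintype β']
    {B' : Ω → β'} (hB : ∀ ω ω', B' ω = B' ω' → B ω = B ω') : cmi p A B C ≤ cmi p A B' C :=
  calc cmi p A B C ≤ cmi p A (fun ω => (B ω, B' ω)) C := by
        rw [cmi_prod_right]
        linarith [cmi_nonneg p A B' (fun ω => (B ω, C ω)) hp0]
    _ = cmi p A B' C := cmi_congr p (fun _ _ => .rfl)
        (fun ω ω' => ⟨fun h => (Prod.mk.inj h).2, fun h => by rw [hB ω ω' h, h]⟩)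
        (fun _ _ => .rfl)

lemma cmi_le_cmi_of_determines (hp0 : ∀ ω, 0 ≤ p ω) {α' β' : Type*} [Fintype α'] [Fintype β']
    {A' : Ω → α'} {B' : Ω → β'} (hA : ∀ ω ω', A' ω = A' ω' → A ω = A ω')
    (hB : ∀ ω ω', B' ω = B' ω' → B ω = B ω') : cmi p A B C ≤ cmi p A' B' C :=
  calc cmi p A B C ≤ cmi p A B' C := cmi_le_cmi_of_determines_right p A B C hp0 hB
    _ = cmi p B' A C := cmi_comm p A B' C
    _ ≤ cmi p B' A' C := cmi_le_cmi_of_determines_right p B' A C hp0 hA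
    _ = cmi p A' B' C := cmi_comm p B' A' C

end CondMutualInfo

lemma exists_isPMF_pos (α : Type*) [Fintype α] [Nonempty α] :
    ∃ Q : α → ℝ, IsPMF Q ∧ ∀ a, 0 < Q a :=
  ⟨fun _ => (Fintype.card α : ℝ)⁻¹, ⟨fun _ => by positivity, by simp⟩, fun _ => by positivity⟩

lemma chan_eq_of_mi_eq_zero {𝒳 𝒲 𝒴 : Type*} [Fintype 𝒳] [Fintype 𝒲] [Fintype 𝒴]
    (Q : 𝒳 → ℝ) (hQ : IsPMF Q) (hQpos : ∀ x, 0 < Q x) (pW : 𝒲 → ℝ) (hpW : IsPMF pW)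
    (K : 𝒴 → 𝒲 → 𝒳 → ℝ) (hK : ∀ w x, IsPMF fun y => K y w x)
    (h : mi (fun z : 𝒳 × 𝒲 × 𝒴 => Q z.1 * pW z.2.1 * K z.2.2 z.2.1 z.1)
      (fun z => z.1) (fun z => (z.2.2, z.2.1)) = 0)
    {w : 𝒲} (hw : pW w ≠ 0) (y : 𝒴) (x x' : 𝒳) : K y w x = K y w x' := by
  set r := fun z : 𝒳 × 𝒲 × 𝒴 => Q z.1 * pW z.2.1 * K z.2.2 z.2.1 z.1
  have hsum : ∀ x, ∑ wy : 𝒲 × 𝒴, r (x, wy) = Q x := fun x => by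
    simp [r, Fintype.sum_prod_type, mul_assoc, ← mul_sum, (hK _ _).2, hpW.2]
  have hr : IsPMF r := ⟨fun z => mul_nonneg (mul_nonneg (hQ.1 _) (hpW.1 _)) ((hK _ _).1 _),
    by rw [Fintype.sum_prod_type]; simp only [hsum, hQ.2]⟩
  have hdist : ∀ z, distOf r (fun z => z) z = r z := distOf_id r
  have hmarg : ∀ x, distOf r (fun z => z.1) x = Q x := fun x => by
    rw [← sum_distOf_prodMk_right r (fun z => z.1) (fun z => z.2), ← hsum]
    exact sum_congr rfl fun wy _ => by simp [← hdist]
  have houtput : ∀ x, pW w * K y w x = distOf r (fun z => (z.2.2, z.2.1)) (y, w) := fun x => by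
    have := distOf_prodMk_eq_mul_of_mi_eq_zero r _ _ hr h x (y, w)
    rw [distOf_congr r (Y := fun z => z) (b := (x, w, y)) fun z => by
      simp only [Prod.ext_iff]; tauto, hdist, hmarg] at this
    exact mul_left_cancel₀ (hQpos x).ne' (by rw [← this, ← mul_assoc])
  exact mul_left_cancel₀ hw ((houtput x).trans (houtput x').symm)

section CodingLaw

variable {Ω 𝒰 𝒱 𝒱1 𝒱2 𝒳1 𝒳2 𝒲 𝒴 : Type*} [Fintype Ω] (p : Ω → ℝ)
  (U : Ω → 𝒰) (V : Ω → 𝒱) (V1 : Ω → 𝒱1) (V2 : Ω → 𝒱2) (X1 : Ω → 𝒳1) (X2 : Ω → 𝒳2)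
  (W : Ω → 𝒲) (Y : Ω → 𝒴)

/-- The law of the code variables when the channel output does not depend on `X1`: in the
paper's notation `a u x1 x2 = P(u) P(x1|u) P(x2|u)`, `b x2 w v v2 y = P(w) P(v|w) P(v2|w,x2)
P(y|w,x2)` and `c v1 w x1 = P(v1|w,x1)`. -/
def HasCodingLaw (a : 𝒰 → 𝒳1 → 𝒳2 → ℝ) (b : 𝒳2 → 𝒲 → 𝒱 → 𝒱2 → 𝒴 → ℝ)
    (c : 𝒱1 → 𝒲 → 𝒳1 → ℝ) : Prop :=
  ∀ u v v1 v2 x1 x2 w y,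
    distOf p (fun ω => (U ω, V ω, V1 ω, V2 ω, X1 ω, X2 ω, W ω, Y ω))
      (u, v, v1, v2, x1, x2, w, y) = a u x1 x2 * b x2 w v v2 y * c v1 w x1

variable {p U V V1 V2 X1 X2 W Y} {a : 𝒰 → 𝒳1 → 𝒳2 → ℝ} {b : 𝒳2 → 𝒲 → 𝒱 → 𝒱2 → 𝒴 → ℝ}
  {c : 𝒱1 → 𝒲 → 𝒳1 → ℝ}

lemma HasCodingLaw.distOf_eq_mul [Fintype 𝒱1] (h : HasCodingLaw p U V V1 V2 X1 X2 W Y a b c)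
    (hc : ∀ w x1, ∑ v1, c v1 w x1 = 1) (u : 𝒰) (v : 𝒱) (v2 : 𝒱2) (x1 : 𝒳1) (x2 : 𝒳2)
    (w : 𝒲) (y : 𝒴) :
    distOf p (fun ω => ((X1 ω, U ω), (W ω, V ω, V2 ω, Y ω), X2 ω)) ((x1, u), (w, v, v2, y), x2)
      = a u x1 x2 * b x2 w v v2 y := by
  rw [← sum_distOf_prodMk_right p _ V1, ← mul_one (a u x1 x2 * b x2 w v v2 y), ← hc w x1,
    mul_sum]
  refine sum_congr rfl fun v1 _ => ?_
  rw [← h]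
  exact distOf_congr p fun ω => by simp only [Prod.mk.injEq]; tauto

variable [Fintype 𝒰] [Fintype 𝒱] [Fintype 𝒱1] [Fintype 𝒱2] [Fintype 𝒳1] [Fintype 𝒳2]
  [Fintype 𝒲] [Fintype 𝒴]

lemma HasCodingLaw.cmi_X1_WVV2Y_X2U_eq_zero (h : HasCodingLaw p U V V1 V2 X1 X2 W Y a b c)
    (hp0 : ∀ ω, 0 ≤ p ω) (hc : ∀ w x1, ∑ v1, c v1 w x1 = 1) :
    cmi p X1 (fun ω => (W ω, V ω, V2 ω, Y ω)) (fun ω => (X2 ω, U ω)) = 0 := by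
  refine cmi_eq_zero_of_factor p _ _ _ hp0 (fun x1 xu => a xu.2 x1 xu.1)
    (fun wvv2y xu => b xu.1 wvv2y.1 wvv2y.2.1 wvv2y.2.2.1 wvv2y.2.2.2) ?_
  rintro x1 ⟨w, v, v2, y⟩ ⟨x2, u⟩
  rw [← h.distOf_eq_mul hc]
  exact distOf_congr p fun ω => by simp only [Prod.mk.injEq]; tauto

lemma HasCodingLaw.cmi_X1_Y_X2_eq_zero (h : HasCodingLaw p U V V1 V2 X1 X2 W Y a b c)
    (hp0 : ∀ ω, 0 ≤ p ω) (hc : ∀ w x1, ∑ v1, c v1 w x1 = 1) : cmi p X1 Y X2 = 0 := by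
  have hzero : cmi p (fun ω => (X1 ω, U ω)) (fun ω => (W ω, V ω, V2 ω, Y ω)) X2 = 0 := by
    refine cmi_eq_zero_of_factor p _ _ _ hp0 (fun xu x2 => a xu.2 xu.1 x2)
      (fun wvv2y x2 => b x2 wvv2y.1 wvv2y.2.1 wvv2y.2.2.1 wvv2y.2.2.2) ?_
    rintro ⟨x1, u⟩ ⟨w, v, v2, y⟩ x2
    exact h.distOf_eq_mul hc u v v2 x1 x2 w y
  refine le_antisymm ?_ (cmi_nonneg p _ _ _ hp0)
  calc cmi p X1 Y X2
      ≤ cmi p (fun ω => (X1 ω, U ω)) (fun ω => (W ω, V ω, V2 ω, Y ω)) X2 :=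
        cmi_le_cmi_of_determines p _ _ _ hp0 (fun _ _ h => (Prod.mk.inj h).1)
          (fun _ _ h => by simp_all)
    _ = 0 := hzero

lemma HasCodingLaw.cmi_V1_X2U_X1WVV2Y_eq_zero (h : HasCodingLaw p U V V1 V2 X1 X2 W Y a b c)
    (hp0 : ∀ ω, 0 ≤ p ω) :
    cmi p V1 (fun ω => (X2 ω, U ω)) (fun ω => ((X1 ω, W ω), (V ω, V2 ω, Y ω))) = 0 := by
  refine cmi_eq_zero_of_factor p _ _ _ hp0 (fun v1 s => c v1 s.1.2 s.1.1)
    (fun xu s => a xu.2 s.1.1 xu.1 * b xu.1 s.1.2 s.2.1 s.2.2.1 s.2.2.2) ?_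
  rintro v1 ⟨x2, u⟩ ⟨⟨x1, w⟩, v, v2, y⟩
  rw [distOf_congr p (Y := fun ω => (U ω, V ω, V1 ω, V2 ω, X1 ω, X2 ω, W ω, Y ω))
    (b := (u, v, v1, v2, x1, x2, w, y)) fun ω => by simp only [Prod.mk.injEq]; tauto, h]
  ring

end CodingLaw

lemma cmi_le_cmi_of_condIndep {Ω α σ ν τ γ β : Type*} [Fintype Ω] [Fintype α] [Fintype σ]
    [Fintype ν] [Fintype τ] [Fintype γ] [Fintype β] (p : Ω → ℝ) (hp0 : ∀ ω, 0 ≤ p ω)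
    (A : Ω → α) (S : Ω → σ) (N : Ω → ν) (T : Ω → τ) (C : Ω → γ) (B : Ω → β)
    (hB : ∀ ω ω', S ω = S ω' → T ω = T ω' → B ω = B ω')
    (h₁ : cmi p A (fun ω => (N ω, T ω)) C = 0)
    (h₂ : cmi p S C (fun ω => ((A ω, N ω), T ω)) = 0) :
    cmi p A B C ≤ cmi p (fun ω => (A ω, N ω)) S T :=
  calc cmi p A B C
      ≤ cmi p A (fun ω => ((N ω, T ω), S ω)) C :=
        cmi_le_cmi_of_determines_right p A B C hp0 fun ω ω' h => by
          simp only [Prod.mk.injEq] at h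
          exact hB ω ω' h.2 h.1.2
    _ = cmi p A S (fun ω => ((N ω, T ω), C ω)) := by rw [cmi_prod_right, h₁, zero_add]
    _ = cmi p S A (fun ω => ((N ω, C ω), T ω)) := by
        rw [cmi_comm]
        exact cmi_congr p (fun _ _ => .rfl) (fun _ _ => .rfl) fun ω ω' => by
          simp only [Prod.mk.injEq]; tauto
    _ ≤ cmi p S (fun ω => ((N ω, C ω), A ω)) T := cmi_le_cmi_prod_right p S _ T hp0 A
    _ = cmi p S (fun ω => ((A ω, N ω), C ω)) T :=
        cmi_congr p (fun _ _ => .rfl) (fun ω ω' => by simp only [Prod.mk.injEq]; tauto)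
          (fun _ _ => .rfl)
    _ = cmi p (fun ω => (A ω, N ω)) S T := by rw [cmi_prod_right, h₂, add_zero, cmi_comm]

theorem stmt_6_general
    {Ω 𝒰 𝒱 𝒱1 𝒱2 𝒳1 𝒳2 𝒲 𝒴 : Type*}
    [Fintype Ω] [Fintype 𝒰] [Fintype 𝒱] [Fintype 𝒱1] [Fintype 𝒱2]
    [Fintype 𝒳1] [Fintype 𝒳2] [Fintype 𝒲] [Fintype 𝒴]
    (pW : 𝒲 → ℝ) (hpW : IsPMF pW)
    (chan : 𝒴 → 𝒲 → 𝒳1 → 𝒳2 → ℝ)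
    (hchan : ∀ w x1 x2, (∀ y, 0 ≤ chan y w x1 x2) ∧ ∑ y, chan y w x1 x2 = 1)
    (hzero : ∀ x2 : 𝒳2, ∀ Q : 𝒳1 → ℝ, IsPMF Q →
      mi (fun z : 𝒳1 × 𝒲 × 𝒴 => Q z.1 * pW z.2.1 * chan z.2.2 z.2.1 z.1 x2)
        (fun z => z.1) (fun z => (z.2.2, z.2.1)) = 0)
    (p : Ω → ℝ) (hp : IsPMF p)
    (U : Ω → 𝒰) (V : Ω → 𝒱) (V1 : Ω → 𝒱1) (V2 : Ω → 𝒱2)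
    (X1 : Ω → 𝒳1) (X2 : Ω → 𝒳2) (W : Ω → 𝒲) (Y : Ω → 𝒴)
    (hfac : ∃ (pU : 𝒰 → ℝ) (pX1 : 𝒳1 → 𝒰 → ℝ) (pX2 : 𝒳2 → 𝒰 → ℝ) (pV : 𝒱 → 𝒲 → ℝ)
      (pV1 : 𝒱1 → 𝒲 → 𝒳1 → ℝ) (pV2 : 𝒱2 → 𝒲 → 𝒳2 → ℝ),
      IsPMF pU ∧
      (∀ u, (∀ x1, 0 ≤ pX1 x1 u) ∧ ∑ x1, pX1 x1 u = 1) ∧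
      (∀ u, (∀ x2, 0 ≤ pX2 x2 u) ∧ ∑ x2, pX2 x2 u = 1) ∧
      (∀ w, (∀ v, 0 ≤ pV v w) ∧ ∑ v, pV v w = 1) ∧
      (∀ w x1, (∀ v1, 0 ≤ pV1 v1 w x1) ∧ ∑ v1, pV1 v1 w x1 = 1) ∧
      (∀ w x2, (∀ v2, 0 ≤ pV2 v2 w x2) ∧ ∑ v2, pV2 v2 w x2 = 1) ∧
      ∀ u v v1 v2 x1 x2 w y,
        distOf p (fun ω => (U ω, V ω, V1 ω, V2 ω, X1 ω, X2 ω, W ω, Y ω))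
            (u, v, v1, v2, x1, x2, w, y)
          = pU u * pX1 x1 u * pX2 x2 u * pW w * pV v w * pV1 v1 w x1 * pV2 v2 w x2 *
            chan y w x1 x2)
    (R0 R01 R02 R1 R2 : ℝ)
    (hR1nn : 0 ≤ R1)
    (ha : R1 + R01 ≤ cmi p X1 (fun ω => (Y ω, V1 ω, V2 ω, V ω)) (fun ω => (X2 ω, U ω)))
    (hb : R0 + R1 + R2 + R01 + R02
      ≤ mi p (fun ω => (X1 ω, X2 ω)) (fun ω => (Y ω, V1 ω, V2 ω, V ω)))
    (hc : R01 ≥ cmi p (fun ω => (X1 ω, W ω)) V1 (fun ω => (V ω, V2 ω, Y ω)))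
    (hd : R01 + R02 + R0
      ≥ cmi p (fun ω => (X1 ω, X2 ω, W ω)) (fun ω => (V1 ω, V2 ω, V ω)) Y) :
    R1 = 0 ∧ R2 ≤ mi p X2 Y := by
  obtain ⟨pU, pX1, pX2, pV, pV1, pV2, -, -, -, -, hV1, -, hlaw⟩ := hfac
  have hpV1 : ∀ w x1, ∑ v1, pV1 v1 w x1 = 1 := fun w x1 => (hV1 w x1).2
  obtain ⟨ω₀, -⟩ := exists_ne_zero_of_sum_ne_zero (hp.2 ▸ one_ne_zero : ∑ ω, p ω ≠ 0)
  have : Nonempty 𝒳1 := ⟨X1 ω₀⟩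
  obtain ⟨Q, hQ, hQpos⟩ := exists_isPMF_pos 𝒳1
  have hcode : HasCodingLaw p U V V1 V2 X1 X2 W Y (fun u x1 x2 => pU u * pX1 x1 u * pX2 x2 u)
      (fun x2 w v v2 y => pW w * pV v w * pV2 v2 w x2 * chan y w (X1 ω₀) x2) pV1 := by
    intro u v v1 v2 x1 x2 w y
    rcases eq_or_ne (pW w) 0 with hw | hw
    · simp [hlaw, hw]
    · rw [hlaw, chan_eq_of_mi_eq_zero Q hQ hQpos pW hpW (fun y w x1 => chan y w x1 x2)
        (fun w x1 => hchan w x1 x2) (hzero x2 Q hQ) hw y x1 (X1 ω₀)]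
      ring
  have hR1 : R1 ≤ 0 := by
    linarith [cmi_le_cmi_of_condIndep p hp.1 X1 V1 W (fun ω => (V ω, V2 ω, Y ω))
      (fun ω => (X2 ω, U ω)) (fun ω => (Y ω, V1 ω, V2 ω, V ω)) (fun _ _ _ _ => by simp_all)
      (hcode.cmi_X1_WVV2Y_X2U_eq_zero hp.1 hpV1) (hcode.cmi_V1_X2U_X1WVV2Y_eq_zero hp.1)]
  refine ⟨le_antisymm hR1 hR1nn, ?_⟩
  linarith [mi_prod_right p (fun ω => (X1 ω, X2 ω)) Y (fun ω => (V1 ω, V2 ω, V ω)),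
    mi_prod_left p X1 X2 Y, hcode.cmi_X1_Y_X2_eq_zero hp.1 hpV1,
    cmi_le_cmi_of_determines p (fun ω => (X1 ω, X2 ω)) (fun ω => (V1 ω, V2 ω, V ω)) Y hp.1
      (A' := fun ω => (X1 ω, X2 ω, W ω)) (fun _ _ h => by simp_all) fun _ _ => id]

/-- Lemma 2 of the paper: if the channel from the uninformed
Transmitter 1 to the informed receiver has zero capacity, then any point of the new
inner bound has `R1 = 0` and `R2 ≤ I(X2;Y)`. -/
theorem stmt_6
    {Ω 𝒰 𝒱 𝒱1 𝒱2 𝒳1 𝒳2 𝒲 𝒴 : Type*}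
    [Fintype Ω] [Fintype 𝒰] [Fintype 𝒱] [Fintype 𝒱1] [Fintype 𝒱2]
    [Fintype 𝒳1] [Fintype 𝒳2] [Fintype 𝒲] [Fintype 𝒴]
    (pW : 𝒲 → ℝ) (hpW : IsPMF pW)
    (chan : 𝒴 → 𝒲 → 𝒳1 → 𝒳2 → ℝ)
    (hchan : ∀ w x1 x2, (∀ y, 0 ≤ chan y w x1 x2) ∧ ∑ y, chan y w x1 x2 = 1)
    (hzero : ∀ x2 : 𝒳2, ∀ Q : 𝒳1 → ℝ, IsPMF Q →
      mi (fun z : 𝒳1 × 𝒲 × 𝒴 => Q z.1 * pW z.2.1 * chan z.2.2 z.2.1 z.1 x2)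
        (fun z => z.1) (fun z => (z.2.2, z.2.1)) = 0)
    (p : Ω → ℝ) (hp : IsPMF p)
    (U : Ω → 𝒰) (V : Ω → 𝒱) (V1 : Ω → 𝒱1) (V2 : Ω → 𝒱2)
    (X1 : Ω → 𝒳1) (X2 : Ω → 𝒳2) (W : Ω → 𝒲) (Y : Ω → 𝒴)
    (hfac : ∃ (pU : 𝒰 → ℝ) (pX1 : 𝒳1 → 𝒰 → ℝ) (pX2 : 𝒳2 → 𝒰 → ℝ) (pV : 𝒱 → 𝒲 → ℝ)
      (pV1 : 𝒱1 → 𝒲 → 𝒳1 → ℝ) (pV2 : 𝒱2 → 𝒲 → 𝒳2 → ℝ),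
      IsPMF pU ∧
      (∀ u, (∀ x1, 0 ≤ pX1 x1 u) ∧ ∑ x1, pX1 x1 u = 1) ∧
      (∀ u, (∀ x2, 0 ≤ pX2 x2 u) ∧ ∑ x2, pX2 x2 u = 1) ∧
      (∀ w, (∀ v, 0 ≤ pV v w) ∧ ∑ v, pV v w = 1) ∧
      (∀ w x1, (∀ v1, 0 ≤ pV1 v1 w x1) ∧ ∑ v1, pV1 v1 w x1 = 1) ∧
      (∀ w x2, (∀ v2, 0 ≤ pV2 v2 w x2) ∧ ∑ v2, pV2 v2 w x2 = 1) ∧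
      ∀ u v v1 v2 x1 x2 w y,
        distOf p (fun ω => (U ω, V ω, V1 ω, V2 ω, X1 ω, X2 ω, W ω, Y ω))
            (u, v, v1, v2, x1, x2, w, y)
          = pU u * pX1 x1 u * pX2 x2 u * pW w * pV v w * pV1 v1 w x1 * pV2 v2 w x2 *
            chan y w x1 x2)
    (R0 R01 R02 R1 R2 : ℝ)
    (hR0nn : 0 ≤ R0) (hR01nn : 0 ≤ R01) (hR02nn : 0 ≤ R02)
    (hR1nn : 0 ≤ R1) (hR2nn : 0 ≤ R2)
    (ha : R1 + R01 ≤ cmi p X1 (fun ω => (Y ω, V1 ω, V2 ω, V ω)) (fun ω => (X2 ω, U ω)))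
    (hb : R0 + R1 + R2 + R01 + R02
      ≤ mi p (fun ω => (X1 ω, X2 ω)) (fun ω => (Y ω, V1 ω, V2 ω, V ω)))
    (hc : R01 ≥ cmi p (fun ω => (X1 ω, W ω)) V1 (fun ω => (V ω, V2 ω, Y ω)))
    (hd : R01 + R02 + R0
      ≥ cmi p (fun ω => (X1 ω, X2 ω, W ω)) (fun ω => (V1 ω, V2 ω, V ω)) Y) :
    R1 = 0 ∧ R2 ≤ mi p X2 Y :=
  stmt_6_general pW hpW chan hchan hzero p hp U V V1 V2 X1 X2 W Y hfac R0 R01 R02 R1 R2 hR1nn ha hb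
    hc hd
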